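/- arXiv:1010.1111 — 3 statements merged into one kernel-verified Lean document; each statement's English description precedes it below -/
import Mathlib

section
/- Let m, p_1, …, p_r, γ₂ be integers with p_1·γ₂ + 1 ≡ 0 (mod m). For integers α, β, set α' = −β and β' = α − γ₂ − 1. Then gcd(m, p_1−1, …, p_r−1, α', β') = gcd(m, p_1−1, …, p_r−1, α, β). -/
/-!
A common divisor `d` of `m` and `p₁ - 1` divides `γ₂ + 1 = (p₁γ₂ + 1) - (p₁ - 1)γ₂`, so
modulo `d` the twist `(α, β) ↦ (-β, α - γ₂ - 1)` is just `(α, β) ↦ (-β, α)`, which has the same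
common divisors. Hence both gcds have the same common divisors with `gcd(m, p₁ - 1, …, p_r - 1)`.
-/

open Finset

theorem gcd_eq_gcd_of_forall_dvd_iff {α : Type*} [CommMonoidWithZero α]
    [NormalizedGCDMonoid α] {a x y : α} (h : ∀ d, d ∣ a → (d ∣ x ↔ d ∣ y)) :
    gcd a x = gcd a y :=
  (gcd_eq_normalize
    (dvd_gcd (gcd_dvd_left _ _) ((h _ (gcd_dvd_left _ _)).1 (gcd_dvd_right _ _)))
    (dvd_gcd (gcd_dvd_left _ _) ((h _ (gcd_dvd_left _ _)).2 (gcd_dvd_right _ _)))).trans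
    (normalize_gcd _ _)

theorem dvd_add_one_of_dvd_mul_add_one {R : Type*} [CommRing R] {d p γ : R}
    (hmul : d ∣ p * γ + 1) (hp : d ∣ p - 1) : d ∣ γ + 1 := by
  have hsub := hmul.sub (hp.mul_right γ)
  rwa [show p * γ + 1 - (p - 1) * γ = γ + 1 by ring] at hsub

theorem dvd_gcd_neg_sub_iff {R : Type*} [CommRing R] [GCDMonoid R] {d γ α β : R}
    (hγ : d ∣ γ + 1) : d ∣ gcd (-β) (α - γ - 1) ↔ d ∣ gcd α β := by
  rw [_root_.dvd_gcd_iff, _root_.dvd_gcd_iff, dvd_neg, sub_sub, dvd_sub_left hγ, and_comm]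

/-- Let `m, p_1, …, p_r, γ₂` be integers with `p_1·γ₂ + 1 ≡ 0 (mod m)`.  For
integers `α, β`, set `α' = −β` and `β' = α − γ₂ − 1`.  Then
`gcd(m, p_1−1, …, p_r−1, α', β') = gcd(m, p_1−1, …, p_r−1, α, β)`. -/
theorem stmt_8 (m γ₂ α β : ℤ) (r : ℕ) (hr : 0 < r) (p : Fin r → ℤ)
    (h : p ⟨0, hr⟩ * γ₂ + 1 ≡ 0 [ZMOD m]) :
    GCDMonoid.gcd m (GCDMonoid.gcd (univ.gcd fun i => p i - 1) (GCDMonoid.gcd (-β) (α - γ₂ - 1))) =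
      GCDMonoid.gcd m (GCDMonoid.gcd (univ.gcd fun i => p i - 1) (GCDMonoid.gcd α β)) := by
  simp only [← gcd_assoc m]
  apply gcd_eq_gcd_of_forall_dvd_iff
  intro d hd
  apply dvd_gcd_neg_sub_iff
  obtain ⟨hdm, hdp⟩ := (_root_.dvd_gcd_iff _ _ _).1 hd
  exact dvd_add_one_of_dvd_mul_add_one (hdm.trans (Int.modEq_zero_iff_dvd.1 h))
    (Finset.dvd_gcd_iff.1 hdp _ (mem_univ _))
end

section
/- Let m ≥ 1 and suppose integers p_1, …, p_r ≥ 2 are coprime to m and satisfy (p_1⋯p_r)·((2g−2) + r − ∑_i (p_1⋯p_r)/p_i / (p_1⋯p_r)) ≡ 0 (mod m), i.e., (p_1⋯p_r)·((2g−2)+r) − ∑_i (p_1⋯p_r)/p_i ≡ 0 (mod m). Then there exist unique n_1, …, n_r ∈ ℤ/mℤ with p_i·n_i + 1 ≡ 0 (mod m), and these satisfy ∑_i n_i ≡ (2−2g) − r (mod m). -/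
/-!
Each `p i` is a unit modulo `m`, so `n i = -(p i)⁻¹` is forced. Multiplying `p i * n i = -1` by
`∏_{j ≠ i} p j` gives `∏_{j ≠ i} p j = -n i * ∏_j p j`; summing over `i` turns the liftability
condition into `(∏ p) * (2g - 2 + r) = -(∏ p) * ∑ n i`, and `∏ p` cancels since it is a unit.
-/

open Finset

variable {R ι : Type*} [CommRing R]

theorem IsUnit.mul_add_one_eq_zero_iff {a b : R} (ha : IsUnit a) :
    a * b + 1 = 0 ↔ b = -↑ha.unit⁻¹ := by
  nth_rw 1 [← ha.unit_spec]
  rw [← eq_neg_iff_add_eq_zero, ← Units.eq_inv_mul_iff_mul_eq, mul_neg_one]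

theorem Finset.prod_erase_eq_neg_mul_prod [DecidableEq ι] {s : Finset ι} {q n : ι → R} {i : ι}
    (hi : i ∈ s) (hqn : q i * n i + 1 = 0) :
    ∏ j ∈ s.erase i, q j = -n i * ∏ j ∈ s, q j := by
  rw [← mul_prod_erase s q hi]
  linear_combination (∏ j ∈ s.erase i, q j) * hqn

theorem Finset.sum_prod_erase_eq_neg_prod_mul_sum [DecidableEq ι] {s : Finset ι} {q n : ι → R}
    (hqn : ∀ i ∈ s, q i * n i + 1 = 0) :
    ∑ i ∈ s, ∏ j ∈ s.erase i, q j = -(∏ j ∈ s, q j) * ∑ i ∈ s, n i := by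
  rw [mul_sum]
  refine sum_congr rfl fun i hi => ?_
  rw [prod_erase_eq_neg_mul_prod hi (hqn i hi)]
  ring

theorem Finset.sum_eq_neg_of_prod_mul_eq_sum_prod_erase [DecidableEq ι] {s : Finset ι}
    {q n : ι → R} {c : R} (hq : ∀ i ∈ s, IsUnit (q i))
    (hc : (∏ i ∈ s, q i) * c = ∑ i ∈ s, ∏ j ∈ s.erase i, q j)
    (hqn : ∀ i ∈ s, q i * n i + 1 = 0) :
    ∑ i ∈ s, n i = -c := by
  rw [sum_prod_erase_eq_neg_prod_mul_sum hqn, neg_mul, ← mul_neg] at hc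
  rw [(IsUnit.prod_iff.2 hq).mul_left_cancel hc, neg_neg]

theorem stmt_9_general (m : ℕ) (g r : ℕ) (p : Fin r → ℤ)
    (hcop : ∀ i, IsCoprime (p i) (m : ℤ))
    (hlift : (∏ i, p i) * ((2 * (g : ℤ) - 2) + r) - ∑ i, ∏ j ∈ univ.erase i, p j
      ≡ 0 [ZMOD (m : ℤ)]) :
    (∃! n : Fin r → ZMod m, ∀ i, (p i : ZMod m) * n i + 1 = 0) ∧
    ∀ n : Fin r → ZMod m, (∀ i, (p i : ZMod m) * n i + 1 = 0) →
      ∑ i, n i = ((2 - 2 * (g : ℤ) - r : ℤ) : ZMod m) := by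
  have hunit : ∀ i, IsUnit (p i : ZMod m) := fun i =>
    (ZMod.coe_int_isUnit_iff_isCoprime _ _).2 (hcop i).symm
  have hkey : (∏ i, (p i : ZMod m)) * ((2 * g - 2 + r : ℤ) : ZMod m)
      = ∑ i, ∏ j ∈ univ.erase i, (p j : ZMod m) := by
    have h := (ZMod.intCast_eq_intCast_iff _ _ _).mpr hlift
    push_cast at h ⊢
    linear_combination h
  refine ⟨⟨fun i => -↑(hunit i).unit⁻¹, fun i => (hunit i).mul_add_one_eq_zero_iff.2 rfl,
    fun n hn => funext fun i => (hunit i).mul_add_one_eq_zero_iff.1 (hn i)⟩, fun n hn => ?_⟩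
  rw [sum_eq_neg_of_prod_mul_eq_sum_prod_erase (fun i _ => hunit i) hkey fun i _ => hn i]
  push_cast
  ring

/-- Let `m ≥ 1` and suppose integers `p i ≥ 2` are coprime to `m` and satisfy the
liftability condition `(p_1⋯p_r)·((2g−2)+r) − ∑_i ∏_{j≠i} p j ≡ 0 (mod m)`.  Then there exist
unique `n i ∈ ℤ/mℤ` with `p i · n i + 1 = 0`, and these satisfy `∑ n i = (2−2g) − r`. -/
theorem stmt_9 (m : ℕ) (hm : 1 ≤ m) (g r : ℕ) (p : Fin r → ℤ) (hp : ∀ i, 2 ≤ p i)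
    (hcop : ∀ i, IsCoprime (p i) (m : ℤ))
    (hlift : (∏ i, p i) * ((2 * (g : ℤ) - 2) + r) - ∑ i, ∏ j ∈ univ.erase i, p j
      ≡ 0 [ZMOD (m : ℤ)]) :
    (∃! n : Fin r → ZMod m, ∀ i, (p i : ZMod m) * n i + 1 = 0) ∧
    ∀ n : Fin r → ZMod m, (∀ i, (p i : ZMod m) * n i + 1 = 0) →
      ∑ i, n i = ((2 - 2 * (g : ℤ) - r : ℤ) : ZMod m) :=
  stmt_9_general m g r p hcop hlift
end

section
/- Let m ≥ 1, g ≥ 0, r ≥ 0, and let p_1, …, p_r ≥ 2 be coprime to m with (p_1⋯p_r)·((2g−2)+r) ≡ ∑_i (p_1⋯p_r)/p_i (mod m). Then the number of lifts of a Fuchsian group of signature (g : p_1, …, p_r) into G_m is exactly m^{2g}: each lift is determined by a free choice of the 2g levels of the hyperbolic generators A_i, B_i in ℤ/mℤ, while the levels of the elliptic generators are uniquely determined. -/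
open Finset

/-!
Since every `p j` is a unit mod `m`, the elliptic levels are forced: `n j = -(p j)⁻¹`.
Multiplying their sum by the unit `∏ p` gives `-∑_i ∏_{j ≠ i} p j`, so the congruence on the
signature says exactly that the product relation holds. The levels of the `2g` hyperbolic
generators are unconstrained, which leaves `m ^ (2g)` lifts.
-/

theorem isUnit_intCast_zmod_of_isCoprime {a : ℤ} {m : ℕ} (h : IsCoprime a (m : ℤ)) :
    IsUnit (a : ZMod m) := by
  simpa using isCoprime_zero_right.mp (by simpa using h.map (Int.castRingHom (ZMod m)))

theorem Nat.card_subtype_prod_snd_of_existsUnique {α β : Type*} {q : β → Prop}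
    (h : ∃! b, q b) : Nat.card {v : α × β // q v.2} = Nat.card α := by
  obtain ⟨b, hb, hb_unique⟩ := h
  exact Nat.card_congr
    { toFun := fun v => v.1.1
      invFun := fun a => ⟨(a, b), hb⟩
      left_inv := fun v => Subtype.ext (Prod.ext rfl (hb_unique _ v.2).symm)
      right_inv := fun _ => rfl }

section CommRing

variable {R ι : Type*} [CommRing R] [Fintype ι] [DecidableEq ι]

theorem Finset.prod_mul_sum_eq_sum_prod_erase_of_mul_eq_one {a b : ι → R}
    (h : ∀ i, a i * b i = 1) : (∏ i, a i) * ∑ i, b i = ∑ i, ∏ j ∈ univ.erase i, a j := by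
  rw [mul_sum]
  refine sum_congr rfl fun i hi => ?_
  rw [← mul_prod_erase univ a hi, mul_right_comm, h i, one_mul]

theorem existsUnique_mul_add_one_eq_zero_and_sum_eq_neg {a : ι → R} (ha : ∀ i, IsUnit (a i))
    {c : R} (hc : (∏ i, a i) * c = ∑ i, ∏ j ∈ univ.erase i, a j) :
    ∃! n : ι → R, (∀ i, a i * n i + 1 = 0) ∧ ∑ i, n i = -c := by
  choose b hb using fun i => (ha i).exists_right_inv
  have hprod : IsUnit (∏ i, a i) := IsUnit.prod_univ_iff.mpr ha
  have hsum : ∑ i, b i = c :=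
    hprod.mul_left_cancel (by rw [prod_mul_sum_eq_sum_prod_erase_of_mul_eq_one hb, hc])
  refine ⟨-b, ⟨fun i => by simp [hb i], by simp [hsum]⟩, fun n hn => funext fun i => ?_⟩
  exact (ha i).mul_left_cancel (show a i * n i = a i * -b i by linear_combination hn.1 i + hb i)

end CommRing

theorem stmt_18_general (m : ℕ) (g r : ℕ) (p : Fin r → ℤ)
    (hcop : ∀ i, IsCoprime (p i) (m : ℤ))
    (hlift : (∏ i, p i) * ((2 * (g : ℤ) - 2) + r) ≡
      ∑ i, ∏ j ∈ univ.erase i, p j [ZMOD (m : ℤ)]) :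
    Nat.card {v : (Fin (2 * g) → ZMod m) × (Fin r → ZMod m) //
        (∀ j, (p j : ZMod m) * v.2 j + 1 = 0) ∧
        ∑ j, v.2 j = ((2 - 2 * (g : ℤ) - r : ℤ) : ZMod m)} = m ^ (2 * g) := by
  have hlift' := (ZMod.intCast_eq_intCast_iff _ _ m).mpr hlift
  push_cast at hlift'
  have hrhs : ((2 - 2 * (g : ℤ) - r : ℤ) : ZMod m) = -(2 * (g : ZMod m) - 2 + r) := by
    push_cast; ring
  have hlevels := existsUnique_mul_add_one_eq_zero_and_sum_eq_neg
    (fun i => isUnit_intCast_zmod_of_isCoprime (hcop i)) hlift'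
  rw [hrhs, Nat.card_subtype_prod_snd_of_existsUnique hlevels,
    Nat.card_fun, Nat.card_zmod, Nat.card_fin]

/-- Let `m ≥ 1`, `g, r ≥ 0`, and `p i ≥ 2` coprime to `m` with
`(p_1⋯p_r)·((2g−2)+r) ≡ ∑_i (p_1⋯p_r)/p_i (mod m)`.  Then the number of lifts of a Fuchsian
group of signature `(g : p_1, …, p_r)` into `G_m` is exactly `m^(2g)`: a lift is determined by
a free choice of the `2g` levels of the hyperbolic generators `A_i, B_i` in `ℤ/mℤ`, while the
levels `n j` of the elliptic generators are uniquely determined by `p_j·n_j + 1 ≡ 0 (mod m)`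
and automatically satisfy the product relation `∑ n_j ≡ (2−2g) − r (mod m)`.  Accordingly a
lift is encoded by its tuple of levels, and the number of such tuples is `m^(2g)`. -/
theorem stmt_18 (m : ℕ) (hm : 1 ≤ m) (g r : ℕ) (p : Fin r → ℤ) (hp : ∀ i, 2 ≤ p i)
    (hcop : ∀ i, IsCoprime (p i) (m : ℤ))
    (hlift : (∏ i, p i) * ((2 * (g : ℤ) - 2) + r) ≡
      ∑ i, ∏ j ∈ univ.erase i, p j [ZMOD (m : ℤ)]) :
    Nat.card {v : (Fin (2 * g) → ZMod m) × (Fin r → ZMod m) //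
        (∀ j, (p j : ZMod m) * v.2 j + 1 = 0) ∧
        ∑ j, v.2 j = ((2 - 2 * (g : ℤ) - r : ℤ) : ZMod m)} = m ^ (2 * g) :=
  stmt_18_general m g r p hcop hlift
end
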